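/- arXiv:1503.06595 — 5 statements merged into one kernel-verified Lean document; each statement's English description precedes it below -/
import Mathlib

section
/- For any simple graph G on n vertices with Laplacian matrix L and any integer k with 2 ≤ k ≤ n, the size of any k-cut of G (i.e., the number of edges joining different parts in any partition of the vertex set into k parts) is at most (n(k-1)/(2k))·λ_max(L), where λ_max(L) is the largest eigenvalue of L. -/
def cutSize {n k : ℕ} (G : SimpleGraph (Fin n)) [DecidableRel G.Adj] (f : Fin n → Fin k) : ℕ :=
  (G.edgeFinset.filter (fun e => ¬ (Sym2.map f e).IsDiag)).card

def hasEigenvalue {n : ℕ} (M : Matrix (Fin n) (Fin n) ℝ) (μ : ℝ) : Prop :=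
  ∃ v : Fin n → ℝ, v ≠ 0 ∧ M.mulVec v = μ • v

def isLargestEigenvalue {n : ℕ} (M : Matrix (Fin n) (Fin n) ℝ) (lam : ℝ) : Prop :=
  hasEigenvalue M lam ∧ ∀ μ : ℝ, hasEigenvalue M μ → μ ≤ lam

/-!
For each part `c` of the partition, centre its indicator vector by subtracting its mean. The
Laplacian quadratic form ignores constants, so the centred indicators still have total Laplacian
energy `2 · cut`, while the Rayleigh bound caps each energy by `λ_max` times the squared norm. A
part of size `N_c` has centred squared norm `N_c - N_c² / n`, and by Cauchy–Schwarz
`∑ N_c² ≥ n² / k`, so the squared norms add up to at most `n (k - 1) / k`.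
-/

open Finset Matrix
open scoped ComplexOrder

namespace Matrix

variable {n 𝕜 : Type*} [Fintype n] [DecidableEq n] [RCLike 𝕜] {A : Matrix n n 𝕜}

theorem IsHermitian.posSemidef_smul_one_sub (hA : A.IsHermitian) {c : ℝ}
    (hc : ∀ i, hA.eigenvalues i ≤ c) : (c • 1 - A).PosSemidef := by
  have hdiag : (diagonal fun i => ((c - hA.eigenvalues i : ℝ) : 𝕜)) =
      c • 1 - diagonal (RCLike.ofReal ∘ hA.eigenvalues) := by
    ext i j
    by_cases h : i = j <;> simp [h, RCLike.real_smul_eq_coe_mul]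
  have hconj : c • 1 - A = Unitary.conjStarAlgAut 𝕜 _ hA.eigenvectorUnitary
      (diagonal fun i => ((c - hA.eigenvalues i : ℝ) : 𝕜)) := by
    rw [hdiag, ← algebraMap_smul 𝕜 c (1 : Matrix n n 𝕜), map_sub, map_smul, map_one,
      ← hA.spectral_theorem]
  rw [hconj, Unitary.conjStarAlgAut_apply, Unitary.isUnit_coe.posSemidef_star_right_conjugate_iff,
    posSemidef_diagonal_iff]
  intro i
  simpa using hc i

end Matrix

theorem dotProduct_mulVec_le_of_forall_hasEigenvalue_le {n : ℕ} {M : Matrix (Fin n) (Fin n) ℝ}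
    (hM : M.IsHermitian) {lam : ℝ} (hlam : ∀ μ, hasEigenvalue M μ → μ ≤ lam) (x : Fin n → ℝ) :
    x ⬝ᵥ M *ᵥ x ≤ lam * (x ⬝ᵥ x) := by
  have hpsd := hM.posSemidef_smul_one_sub fun i => hlam _
    ⟨_, fun h => hM.eigenvectorBasis.orthonormal.ne_zero i (PiLp.ext (congrFun h)),
      hM.mulVec_eigenvectorBasis i⟩
  simpa [sub_mulVec, smul_mulVec, dotProduct_sub] using
    hpsd.dotProduct_mulVec_nonneg x

section Partition

variable {V ι : Type*} [DecidableEq ι] (f : V → ι)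

theorem Fintype.sum_card_fiber [Fintype V] [Fintype ι] :
    ∑ c, #{v | f v = c} = Fintype.card V := by
  rw [← card_univ, card_eq_sum_card_fiberwise fun v _ => mem_univ (f v)]

theorem Fintype.card_sq_le_card_mul_sum_card_fiber_sq [Fintype V] [Fintype ι] :
    Fintype.card V ^ 2 ≤ Fintype.card ι * ∑ c, #{v | f v = c} ^ 2 := by
  simpa [Fintype.sum_card_fiber] using
    sq_sum_le_card_mul_sum_sq (s := univ) (f := fun c => #{v | f v = c})

def classIndicator (c : ι) (v : V) : ℝ := if f v = c then 1 else 0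

noncomputable def centeredClassIndicator [Fintype V] (c : ι) (v : V) : ℝ :=
  classIndicator f c v - #{v | f v = c} / Fintype.card V

theorem sum_classIndicator_sub_sq [Fintype ι] (i j : V) :
    ∑ c, (classIndicator f c i - classIndicator f c j) ^ 2 = if f i = f j then 0 else 2 := by
  split_ifs with h
  · simp [classIndicator, h]
  · have hterm : ∀ c, (classIndicator f c i - classIndicator f c j) ^ 2 =
        classIndicator f c i + classIndicator f c j := by
      intro c
      by_cases hi : f i = c <;> by_cases hj : f j = c
      · exact absurd (hi.trans hj.symm) h
      all_goals simp [classIndicator, hi, hj]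
    rw [sum_congr rfl fun c _ => hterm c, sum_add_distrib]
    simp [classIndicator]
    norm_num

theorem dotProduct_centeredClassIndicator_self [Fintype V] [Nonempty V] (c : ι) :
    centeredClassIndicator f c ⬝ᵥ centeredClassIndicator f c =
      #{v | f v = c} - (#{v | f v = c} : ℝ) ^ 2 / Fintype.card V := by
  have hV : (Fintype.card V : ℝ) ≠ 0 := by positivity
  set m : ℝ := #{v | f v = c} / Fintype.card V
  have hterm : ∀ v, centeredClassIndicator f c v * centeredClassIndicator f c v =
      classIndicator f c v * (1 - 2 * m) + m ^ 2 := by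
    intro v
    by_cases hv : f v = c <;> simp [centeredClassIndicator, classIndicator, hv, m] <;> ring
  simp only [dotProduct, hterm, sum_add_distrib, ← sum_mul, sum_const, card_univ, nsmul_eq_mul]
  simp only [classIndicator, sum_boole, m]
  field_simp
  ring

theorem sum_dotProduct_centeredClassIndicator_le [Fintype V] [Nonempty V] [Fintype ι] :
    ∑ c, centeredClassIndicator f c ⬝ᵥ centeredClassIndicator f c ≤
      Fintype.card V * (Fintype.card ι - 1) / Fintype.card ι := by
  have hV : (0 : ℝ) < Fintype.card V := by exact_mod_cast Fintype.card_pos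
  have : Nonempty ι := ⟨f (Classical.arbitrary V)⟩
  have hι : (0 : ℝ) < Fintype.card ι := by exact_mod_cast Fintype.card_pos
  have hsum : ∑ c, (#{v | f v = c} : ℝ) = Fintype.card V := by
    exact_mod_cast Fintype.sum_card_fiber f
  have hcs : (Fintype.card V : ℝ) ^ 2 ≤ Fintype.card ι * ∑ c, (#{v | f v = c} : ℝ) ^ 2 := by
    exact_mod_cast Fintype.card_sq_le_card_mul_sum_card_fiber_sq f
  have hmean : (Fintype.card V : ℝ) / Fintype.card ι ≤
      (∑ c, (#{v | f v = c} : ℝ) ^ 2) / Fintype.card V := by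
    rw [div_le_div_iff₀ hι hV]
    linarith
  simp only [dotProduct_centeredClassIndicator_self, sum_sub_distrib, hsum, ← sum_div]
  calc _ ≤ (Fintype.card V : ℝ) - Fintype.card V / Fintype.card ι := by linarith
    _ = _ := by field_simp

end Partition

namespace SimpleGraph

variable {V ι : Type*} [Fintype V] [DecidableEq V] [Fintype ι] [DecidableEq ι]
  (G : SimpleGraph V) [DecidableRel G.Adj] (f : V → ι)

theorem dotProduct_lapMatrix_mulVec_sub_const (x : V → ℝ) (a : ℝ) :
    (fun v => x v - a) ⬝ᵥ G.lapMatrix ℝ *ᵥ (fun v => x v - a) = x ⬝ᵥ G.lapMatrix ℝ *ᵥ x := by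
  simp only [← toLinearMap₂'_apply', lapMatrix_toLinearMap₂', sub_sub_sub_cancel_right]

theorem sum_dotProduct_lapMatrix_classIndicator :
    ∑ c, classIndicator f c ⬝ᵥ G.lapMatrix ℝ *ᵥ classIndicator f c =
      #{p : V × V | G.Adj p.1 p.2 ∧ f p.1 ≠ f p.2} := by
  calc ∑ c, classIndicator f c ⬝ᵥ G.lapMatrix ℝ *ᵥ classIndicator f c
      = (∑ i, ∑ j, if G.Adj i j then
          ∑ c, (classIndicator f c i - classIndicator f c j) ^ 2 else 0) / 2 := by
        simp only [← toLinearMap₂'_apply', lapMatrix_toLinearMap₂', ← sum_div, ite_sum_zero]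
        rw [sum_comm]
        exact congrArg (· / 2) (sum_congr rfl fun i _ => sum_comm)
    _ = ∑ i, ∑ j, if G.Adj i j ∧ f i ≠ f j then (1 : ℝ) else 0 := by
        simp only [sum_classIndicator_sub_sq, sum_div]
        congr! 2 with i - j -
        by_cases hadj : G.Adj i j <;> by_cases hf : f i = f j <;> simp [hadj, hf]
    _ = #{p : V × V | G.Adj p.1 p.2 ∧ f p.1 ≠ f p.2} := by
        rw [card_filter, Fintype.sum_prod_type]
        push_cast
        rfl

theorem card_adj_ne_le [Nonempty V] {lam : ℝ}
    (hlam : ∀ x, x ⬝ᵥ G.lapMatrix ℝ *ᵥ x ≤ lam * (x ⬝ᵥ x)) :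
    (#{p : V × V | G.Adj p.1 p.2 ∧ f p.1 ≠ f p.2} : ℝ) ≤
      lam * (Fintype.card V * (Fintype.card ι - 1) / Fintype.card ι) := by
  have hlam0 : 0 ≤ lam := by
    have h := hlam fun _ => 1
    rw [lapMatrix_mulVec_const_eq_zero, dotProduct_zero] at h
    exact nonneg_of_mul_nonneg_left h (by simp [dotProduct, Fintype.card_pos])
  rw [← sum_dotProduct_lapMatrix_classIndicator]
  calc ∑ c, classIndicator f c ⬝ᵥ G.lapMatrix ℝ *ᵥ classIndicator f c
      = ∑ c, centeredClassIndicator f c ⬝ᵥ G.lapMatrix ℝ *ᵥ centeredClassIndicator f c :=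
        sum_congr rfl fun c _ => (G.dotProduct_lapMatrix_mulVec_sub_const _ _).symm
    _ ≤ ∑ c, lam * (centeredClassIndicator f c ⬝ᵥ centeredClassIndicator f c) :=
        sum_le_sum fun c _ => hlam _
    _ ≤ lam * (Fintype.card V * (Fintype.card ι - 1) / Fintype.card ι) := by
        rw [← mul_sum]
        exact mul_le_mul_of_nonneg_left (sum_dotProduct_centeredClassIndicator_le f) hlam0

end SimpleGraph

theorem two_mul_cutSize {n k : ℕ} (G : SimpleGraph (Fin n)) [DecidableRel G.Adj]
    (f : Fin n → Fin k) :
    2 * cutSize G f = #{p : Fin n × Fin n | G.Adj p.1 p.2 ∧ f p.1 ≠ f p.2} := by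
  let H := G ⊓ (⊤ : SimpleGraph (Fin k)).comap f
  have hH : H.edgeFinset = G.edgeFinset.filter fun e => ¬ (Sym2.map f e).IsDiag := by
    ext e
    induction e using Sym2.ind
    simp [H]
  rw [cutSize, ← hH]
  convert H.two_mul_card_edgeFinset using 3 with ⟨i, j⟩
  · ext; simp
  · exact Iff.rfl

theorem stmt_0_general {n k : ℕ}
    (G : SimpleGraph (Fin n)) [DecidableRel G.Adj]
    (lam : ℝ) (hlam : isLargestEigenvalue (G.lapMatrix ℝ) lam)
    (f : Fin n → Fin k) :
    (cutSize G f : ℝ) ≤ (n : ℝ) * ((k : ℝ) - 1) / (2 * k) * lam := by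
  obtain ⟨v, hv, -⟩ := hlam.1
  obtain ⟨i, -⟩ := Function.ne_iff.mp hv
  have : Nonempty (Fin n) := ⟨i⟩
  have hbound := G.card_adj_ne_le f
    (dotProduct_mulVec_le_of_forall_hasEigenvalue_le (G.isHermitian_lapMatrix ℝ) hlam.2)
  rw [← two_mul_cutSize, Fintype.card_fin, Fintype.card_fin] at hbound
  push_cast at hbound
  linarith [show (n : ℝ) * (k - 1) / (2 * k) * lam = lam * (n * (k - 1) / k) / 2 by ring]

theorem stmt_0 {n k : ℕ} (hk2 : 2 ≤ k) (hkn : k ≤ n)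
    (G : SimpleGraph (Fin n)) [DecidableRel G.Adj]
    (lam : ℝ) (hlam : isLargestEigenvalue (G.lapMatrix ℝ) lam)
    (f : Fin n → Fin k) :
    (cutSize G f : ℝ) ≤ (n : ℝ) * ((k : ℝ) - 1) / (2 * k) * lam :=
  stmt_0_general G lam hlam f
end

section
/- For any simple graph G = (V,E) with Laplacian matrix L and n = |V| vertices, the chromatic number satisfies χ(G) ≥ 1 + 2|E| / (n·λ_max(L) − 2|E|), provided n·λ_max(L) > 2|E|. -/
/-!
For a proper colouring `C : V → Fin c`, take the `c` vectors `x_i = 𝟙[C = i] - 1/c`. Every edge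
`uv` has `∑ i, (x_i u - x_i v)² = 2`, so their Laplacian energies add up to `2|E|`, while their
squared norms add up to `n (1 - 1/c)`. Bounding each energy by `λ_max ‖x_i‖²` gives
`2|E| ≤ λ_max n (1 - 1/c)`, which rearranges to the claim.
-/

open Matrix Finset

theorem Matrix.IsHermitian.dotProduct_mulVec_le {ι : Type*} [Fintype ι] [DecidableEq ι]
    {M : Matrix ι ι ℝ} (hM : M.IsHermitian) {lam : ℝ} (hlam : ∀ i, hM.eigenvalues i ≤ lam)
    (x : ι → ℝ) : x ⬝ᵥ M *ᵥ x ≤ lam * (x ⬝ᵥ x) := by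
  have hpsd : (algebraMap ℝ _ lam - M).PosSemidef := by
    refine posSemidef_iff_isHermitian_and_spectrum_nonneg.mpr
      ⟨(IsSelfAdjoint.algebraMap _ (.all lam)).sub hM, ?_⟩
    rw [← spectrum.singleton_sub_eq, hM.spectrum_real_eq_range_eigenvalues]
    rintro _ ⟨_, rfl, _, ⟨i, rfl⟩, rfl⟩
    exact sub_nonneg.mpr (hlam i)
  have := hpsd.dotProduct_mulVec_nonneg x
  rw [Algebra.algebraMap_eq_smul_one, sub_mulVec, smul_mulVec, one_mulVec, dotProduct_sub,
    dotProduct_smul, star_trivial, smul_eq_mul] at this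
  linarith

theorem Matrix.IsHermitian.hasEigenvalue_eigenvalues {n : ℕ} {M : Matrix (Fin n) (Fin n) ℝ}
    (hM : M.IsHermitian) (i : Fin n) : hasEigenvalue M (hM.eigenvalues i) :=
  ⟨_, fun h ↦ hM.eigenvectorBasis.orthonormal.ne_zero i (WithLp.ofLp_injective 2 (by simp [h])),
    hM.mulVec_eigenvectorBasis i⟩

theorem isLargestEigenvalue.dotProduct_mulVec_le {n : ℕ} {M : Matrix (Fin n) (Fin n) ℝ}
    {lam : ℝ} (hlam : isLargestEigenvalue M lam) (hM : M.IsHermitian) (x : Fin n → ℝ) :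
    x ⬝ᵥ M *ᵥ x ≤ lam * (x ⬝ᵥ x) :=
  hM.dotProduct_mulVec_le (fun i ↦ hlam.2 _ (hM.hasEigenvalue_eigenvalues i)) x

variable {V : Type*} {c : ℕ}

noncomputable def centeredIndicator (f : V → Fin c) (i : Fin c) : V → ℝ :=
  fun v ↦ (if f v = i then 1 else 0) - (c : ℝ)⁻¹

lemma sum_centeredIndicator_sub_sq (f : V → Fin c) {u v : V} (huv : f u ≠ f v) :
    ∑ i, (centeredIndicator f i u - centeredIndicator f i v) ^ 2 = 2 := by
  have hpt : ∀ i, (centeredIndicator f i u - centeredIndicator f i v) ^ 2 =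
      (if f u = i then 1 else 0) + (if f v = i then 1 else 0) := by
    intro i
    unfold centeredIndicator
    split_ifs with h1 h2 <;> first | exact absurd (h1.trans h2.symm) huv | ring
  simp [hpt, sum_add_distrib, one_add_one_eq_two]

lemma sum_centeredIndicator_sq (f : V → Fin c) (v : V) :
    ∑ i, centeredIndicator f i v ^ 2 = 1 - (c : ℝ)⁻¹ := by
  have hc : (c : ℝ) ≠ 0 := Nat.cast_ne_zero.mpr (Fin.pos (f v)).ne'
  have hpt : ∀ i, centeredIndicator f i v ^ 2 =
      (1 - 2 * (c : ℝ)⁻¹) * (if f v = i then 1 else 0) + (c : ℝ)⁻¹ ^ 2 := by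
    intro i
    unfold centeredIndicator
    split_ifs <;> ring
  simp only [hpt, sum_add_distrib, ← mul_sum, sum_ite_eq, mem_univ, if_true, sum_const, card_univ,
    Fintype.card_fin, nsmul_eq_mul]
  field_simp
  ring

lemma sum_dotProduct_centeredIndicator [Fintype V] (f : V → Fin c) :
    ∑ i, centeredIndicator f i ⬝ᵥ centeredIndicator f i = Fintype.card V * (1 - (c : ℝ)⁻¹) := by
  simp only [dotProduct, ← sq]
  rw [sum_comm]
  simp only [sum_centeredIndicator_sq, sum_const, card_univ, nsmul_eq_mul]

variable [Fintype V] [DecidableEq V] {G : SimpleGraph V} [DecidableRel G.Adj]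

lemma SimpleGraph.Coloring.sum_lapMatrix_centeredIndicator (C : G.Coloring (Fin c)) :
    ∑ i, centeredIndicator C i ⬝ᵥ G.lapMatrix ℝ *ᵥ centeredIndicator C i =
      2 * #G.edgeFinset := by
  have hdeg : ∀ u, ∑ v, (if G.Adj u v then (2 : ℝ) else 0) = 2 * G.degree u := by
    intro u
    rw [← sum_filter, sum_const, nsmul_eq_mul, mul_comm, ← card_neighborFinset_eq_degree,
      neighborFinset_eq_filter]
  have hedge : ∀ u v, (∑ i, if G.Adj u v then
      (centeredIndicator C i u - centeredIndicator C i v) ^ 2 else 0) =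
      if G.Adj u v then 2 else 0 := by
    intro u v
    split_ifs with huv
    · exact sum_centeredIndicator_sub_sq C (C.valid huv)
    · exact sum_const_zero
  simp_rw [← toLinearMap₂'_apply', lapMatrix_toLinearMap₂', ← sum_div]
  rw [sum_comm]
  simp_rw [sum_comm (γ := Fin c), hedge, hdeg, ← mul_sum]
  rw [← Nat.cast_sum, sum_degrees_eq_twice_card_edges]
  push_cast
  ring

theorem SimpleGraph.Coloring.two_mul_card_edgeFinset_le {lam : ℝ}
    (hL : ∀ x : V → ℝ, x ⬝ᵥ G.lapMatrix ℝ *ᵥ x ≤ lam * (x ⬝ᵥ x)) (C : G.Coloring (Fin c)) :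
    2 * #G.edgeFinset ≤ lam * (Fintype.card V * (1 - (c : ℝ)⁻¹)) := by
  rw [← C.sum_lapMatrix_centeredIndicator, ← sum_dotProduct_centeredIndicator, mul_sum]
  exact sum_le_sum fun i _ ↦ hL _

theorem stmt_1 {n : ℕ} (G : SimpleGraph (Fin n)) [DecidableRel G.Adj]
    (lam : ℝ) (hlam : isLargestEigenvalue (G.lapMatrix ℝ) lam)
    (h : 2 * (G.edgeFinset.card : ℝ) < (n : ℝ) * lam) :
    ∀ c : ℕ, G.Colorable c →
      1 + 2 * (G.edgeFinset.card : ℝ) / ((n : ℝ) * lam - 2 * G.edgeFinset.card) ≤ (c : ℝ) := by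
  rintro c ⟨C⟩
  have hedges :=
    C.two_mul_card_edgeFinset_le (hlam.dotProduct_mulVec_le (G.isHermitian_lapMatrix ℝ))
  rw [Fintype.card_fin] at hedges
  have hn : 0 < n := by
    by_contra! hn
    simp only [Nat.le_zero.mp hn, Nat.cast_zero, zero_mul] at h
    exact h.not_ge (by positivity)
  have hc : (0 : ℝ) < c := Nat.cast_pos.mpr (Fin.pos (C ⟨0, hn⟩))
  have hcross : 2 * (#G.edgeFinset : ℝ) * c ≤ (c - 1) * (n * lam) := by
    calc _ ≤ lam * (n * (1 - (c : ℝ)⁻¹)) * c := by gcongr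
      _ = _ := by field_simp
  rw [add_comm, ← le_sub_iff_add_le, div_le_iff₀ (sub_pos.mpr h)]
  linarith
end

section
/- The maximum of Σ_{i<j} m_i m_j over nonnegative integers m_1,...,m_k with Σ m_i = n is attained by taking e parts of size ⌈n/k⌉ and k−e parts of size ⌊n/k⌋, where e = n − k⌊n/k⌋. -/
/-! Since `(∑ mᵢ)² = 2 · pairSum m + ∑ mᵢ²`, maximising `pairSum` at fixed sum `n` means minimising
`∑ mᵢ²`. With `q = n / k`, every natural `x` satisfies `x² ≥ (2q + 1) x - q (q + 1)`, with equality
exactly for `x ∈ {q, q + 1}`; summing gives `∑ mᵢ² ≥ (2q + 1) n - k q (q + 1)`, and the balanced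
vector, all of whose entries are `q` or `q + 1`, attains this bound. -/

def pairSum {k : ℕ} (m : Fin k → ℕ) : ℕ :=
  ∑ p ∈ (Finset.univ : Finset (Fin k × Fin k)).filter (fun p => p.1 < p.2), m p.1 * m p.2

open Finset

lemma sq_sum_eq_two_mul_pairSum_add_sum_sq {k : ℕ} (m : Fin k → ℕ) :
    (∑ i, m i) ^ 2 = 2 * pairSum m + ∑ i, m i ^ 2 := by
  have trichotomy : ∀ p : Fin k × Fin k, m p.1 * m p.2 =
      ((if p.1 < p.2 then m p.1 * m p.2 else 0) + if p.2 < p.1 then m p.2 * m p.1 else 0)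
        + if p.1 = p.2 then m p.1 * m p.2 else 0 := by
    rintro ⟨i, j⟩
    rcases lt_trichotomy i j with h | rfl | h
    · simp [h, h.not_gt, h.ne]
    · simp
    · simp [h, h.not_gt, h.ne', mul_comm]
  have swap : ∑ p : Fin k × Fin k, (if p.2 < p.1 then m p.2 * m p.1 else 0) = pairSum m := by
    rw [pairSum, sum_filter]
    exact Fintype.sum_equiv (Equiv.prodComm _ _) _ _ fun _ => rfl
  have diag : ∑ p : Fin k × Fin k, (if p.1 = p.2 then m p.1 * m p.2 else 0) = ∑ i, m i ^ 2 := by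
    simp [Fintype.sum_prod_type, sq]
  rw [sq, sum_mul_sum, ← Fintype.sum_prod_type', Fintype.sum_congr _ _ trichotomy,
    sum_add_distrib, sum_add_distrib, swap, diag, ← sum_filter, ← pairSum]
  ring

lemma pairSum_le_pairSum_of_sum_sq_le {k : ℕ} {m m' : Fin k → ℕ}
    (hsum : ∑ i, m' i = ∑ i, m i) (hsq : ∑ i, m i ^ 2 ≤ ∑ i, m' i ^ 2) :
    pairSum m' ≤ pairSum m := by
  have h := sq_sum_eq_two_mul_pairSum_add_sum_sq m
  have h' := sq_sum_eq_two_mul_pairSum_add_sum_sq m'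
  rw [hsum] at h'
  omega

/-- `(x - q) (x - q - 1) ≥ 0`, as no integer lies strictly between `q` and `q + 1`. -/
lemma Nat.two_mul_add_one_mul_le_sq_add (q x : ℕ) : (2 * q + 1) * x ≤ x ^ 2 + q * (q + 1) := by
  rcases le_or_gt x q with h | h
  · nlinarith
  · nlinarith

lemma Finset.two_mul_add_one_mul_sum_le {ι : Type*} (s : Finset ι) (q : ℕ) (m : ι → ℕ) :
    (2 * q + 1) * ∑ i ∈ s, m i ≤ ∑ i ∈ s, m i ^ 2 + #s * (q * (q + 1)) := by
  rw [mul_sum, ← smul_eq_mul (#s), ← sum_const, ← sum_add_distrib]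
  exact sum_le_sum fun i _ => Nat.two_mul_add_one_mul_le_sq_add q (m i)

lemma Fin.sum_ite_val_lt {M : Type*} [AddCommMonoid M] {k e : ℕ} (he : e ≤ k) (a b : M) :
    ∑ i : Fin k, (if (i : ℕ) < e then a else b) = e • a + (k - e) • b := by
  obtain ⟨d, rfl⟩ := Nat.exists_eq_add_of_le he
  rw [Fin.sum_univ_eq_sum_range (fun i => if i < e then a else b), sum_range_add,
    sum_congr rfl fun i hi => if_pos (mem_range.mp hi), Nat.add_sub_cancel_left]
  simp

theorem stmt_7_general {n k : ℕ} (hk : 1 ≤ k)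
    (m : Fin k → ℕ) (hm : ∀ i : Fin k, m i = if (i : ℕ) < n % k then n / k + 1 else n / k) :
    (∑ i, m i = n) ∧ ∀ m' : Fin k → ℕ, (∑ i, m' i = n) → pairSum m' ≤ pairSum m := by
  have he : n % k ≤ k := (Nat.mod_lt n hk).le
  have hn := Nat.div_add_mod n k
  generalize n / k = q at hm hn
  generalize n % k = e at hm hn he
  have hsum : ∑ i, m i = n := by
    simp only [hm, Fin.sum_ite_val_lt he, smul_eq_mul]
    zify [he] at hn ⊢
    linear_combination hn
  have hsq : ∑ i, m i ^ 2 + k * (q * (q + 1)) = (2 * q + 1) * n := by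
    simp only [hm, apply_ite (· ^ 2), Fin.sum_ite_val_lt he, smul_eq_mul]
    zify [he] at hn ⊢
    linear_combination (2 * (q : ℤ) + 1) * hn
  refine ⟨hsum, fun m' hm' => pairSum_le_pairSum_of_sum_sq_le (hm'.trans hsum.symm) ?_⟩
  have hbound := (univ : Finset (Fin k)).two_mul_add_one_mul_sum_le q m'
  rw [hm', card_univ, Fintype.card_fin] at hbound
  omega

theorem stmt_7 {n k : ℕ} (hk : 1 ≤ k) (hkn : k ≤ n)
    (m : Fin k → ℕ) (hm : ∀ i : Fin k, m i = if (i : ℕ) < n % k then n / k + 1 else n / k) :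
    (∑ i, m i = n) ∧ ∀ m' : Fin k → ℕ, (∑ i, m' i = n) → pairSum m' ≤ pairSum m :=
  stmt_7_general hk m hm
end

section
/- The maximum q-cut of H(d,q,d) equals the number of its edges, (1/2)·(q−1)^d·q^d, and this equals the eigenvalue bound (q^d(q−1)/(2q))·λ_max(L) = (q^d(q−1)/(2q))·q(q−1)^{d−1}. Consequently the chromatic number of H(d,q,d) equals q. -/
def hammingGraph (d q j : ℕ) : SimpleGraph (Fin d → Fin q) where
  Adj x y := x ≠ y ∧ hammingDist x y = j
  symm := ⟨fun x y h => ⟨h.1.symm, by rw [hammingDist_comm]; exact h.2⟩⟩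
  loopless := ⟨fun x h => h.1 rfl⟩

instance (d q j : ℕ) : DecidableRel (hammingGraph d q j).Adj :=
  fun x y => inferInstanceAs (Decidable (x ≠ y ∧ hammingDist x y = j))

def cutSizeH {d q k : ℕ} (G : SimpleGraph (Fin d → Fin q)) [DecidableRel G.Adj]
    (f : (Fin d → Fin q) → Fin k) : ℕ :=
  (G.edgeFinset.filter (fun e => ¬ (Sym2.map f e).IsDiag)).card

/-
A graph cannot cut more than all of its edges, and a proper q-coloring cuts every edge; the
coloring by one coordinate is proper in H(d,q,d) while the q constant vectors form a q-clique,
so the maximum q-cut is the whole edge set and χ = q. Since H(d,q,d) is (q-1)^d-regular on q^d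
vertices, the handshake lemma counts the edges.
-/

open Finset

namespace SimpleGraph

theorem IsRegularOfDegree.two_mul_card_edgeFinset {V : Type*} [Fintype V] {G : SimpleGraph V}
    [DecidableRel G.Adj] {k : ℕ} (h : G.IsRegularOfDegree k) :
    2 * #G.edgeFinset = k * Fintype.card V := by
  rw [← sum_degrees_eq_twice_card_edges, sum_congr rfl fun v _ => h v, sum_const, card_univ,
    smul_eq_mul, mul_comm]

end SimpleGraph

section CutSize

variable {d q k : ℕ} (G : SimpleGraph (Fin d → Fin q)) [DecidableRel G.Adj]

theorem cutSizeH_le_card_edgeFinset (f : (Fin d → Fin q) → Fin k) :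
    cutSizeH G f ≤ #G.edgeFinset :=
  card_filter_le _ _

theorem cutSizeH_coloring (C : G.Coloring (Fin k)) : cutSizeH G C = #G.edgeFinset := by
  refine congrArg card (filter_true_of_mem fun e he => ?_)
  induction e with
  | _ x y => simpa using C.valid (G.mem_edgeFinset.mp he)

end CutSize

namespace hammingGraph

variable {d q : ℕ}

theorem apply_ne_of_adj {x y : Fin d → Fin q} (h : (hammingGraph d q d).Adj x y) (i : Fin d) :
    x i ≠ y i := by
  have : #{i | x i ≠ y i} = #(univ : Finset (Fin d)) := by simpa [hammingDist] using h.2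
  simpa using filter_card_eq this i (mem_univ i)

theorem adj_iff (hd : 0 < d) {x y : Fin d → Fin q} :
    (hammingGraph d q d).Adj x y ↔ ∀ i, x i ≠ y i := by
  refine ⟨apply_ne_of_adj, fun h => ⟨fun hxy => h ⟨0, hd⟩ (congrFun hxy _), ?_⟩⟩
  simpa [hammingDist] using card_filter_eq_iff.mpr fun i (_ : i ∈ univ) => h i

theorem isRegularOfDegree (hd : 0 < d) : (hammingGraph d q d).IsRegularOfDegree ((q - 1) ^ d) := by
  intro x
  have : (hammingGraph d q d).neighborFinset x = Fintype.piFinset fun i => {x i}ᶜ := by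
    ext y
    simp [adj_iff hd, eq_comm]
  rw [← SimpleGraph.card_neighborFinset_eq_degree, this]
  simp [card_compl]

theorem two_mul_card_edgeFinset (hd : 0 < d) :
    2 * #(hammingGraph d q d).edgeFinset = (q - 1) ^ d * q ^ d := by
  simp [(isRegularOfDegree hd).two_mul_card_edgeFinset]

def coordColoring (i : Fin d) : (hammingGraph d q d).Coloring (Fin q) :=
  SimpleGraph.Coloring.mk (fun x => x i) fun h => apply_ne_of_adj h i

theorem chromaticNumber_eq (hd : 0 < d) : (hammingGraph d q d).chromaticNumber = q := by
  refine le_antisymm (by simpa using (coordColoring ⟨0, hd⟩).colorable.chromaticNumber_le) ?_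
  refine SimpleGraph.le_chromaticNumber_of_pairwise_adj (by simp)
    (fun a : Fin q => fun _ : Fin d => a) fun a b hab => (adj_iff hd).mpr fun _ => hab

end hammingGraph

theorem eigenvalue_bound_eq_half_edges (x : ℝ) {d : ℕ} (hd : 0 < d) :
    x ^ d * (x - 1) / (2 * x) * (x * (x - 1) ^ (d - 1)) = (x - 1) ^ d * x ^ d / 2 := by
  obtain ⟨d, rfl⟩ : ∃ n, d = n + 1 := ⟨d - 1, by omega⟩
  rw [Nat.add_sub_cancel]
  rcases eq_or_ne x 0 with rfl | hx
  · simp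
  · field_simp
    ring

theorem stmt_16_general {d q : ℕ} (hd : 1 ≤ d) :
    (∀ f : (Fin d → Fin q) → Fin q,
      cutSizeH (hammingGraph d q d) f ≤ (hammingGraph d q d).edgeFinset.card) ∧
    (∃ f : (Fin d → Fin q) → Fin q,
      cutSizeH (hammingGraph d q d) f = (hammingGraph d q d).edgeFinset.card) ∧
    2 * (hammingGraph d q d).edgeFinset.card = (q - 1) ^ d * q ^ d ∧
    ((q : ℝ) ^ d * ((q : ℝ) - 1) / (2 * q)) * ((q : ℝ) * ((q : ℝ) - 1) ^ (d - 1))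
      = ((q : ℝ) - 1) ^ d * (q : ℝ) ^ d / 2 ∧
    (hammingGraph d q d).chromaticNumber = (q : ℕ∞) := by
  exact ⟨cutSizeH_le_card_edgeFinset _,
    ⟨_, cutSizeH_coloring _ (hammingGraph.coordColoring ⟨0, hd⟩)⟩,
    hammingGraph.two_mul_card_edgeFinset hd,
    eigenvalue_bound_eq_half_edges _ hd,
    hammingGraph.chromaticNumber_eq hd⟩

theorem stmt_16 {d q : ℕ} (hd : 1 ≤ d) (hq : 2 ≤ q) :
    (∀ f : (Fin d → Fin q) → Fin q,
      cutSizeH (hammingGraph d q d) f ≤ (hammingGraph d q d).edgeFinset.card) ∧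
    (∃ f : (Fin d → Fin q) → Fin q,
      cutSizeH (hammingGraph d q d) f = (hammingGraph d q d).edgeFinset.card) ∧
    2 * (hammingGraph d q d).edgeFinset.card = (q - 1) ^ d * q ^ d ∧
    ((q : ℝ) ^ d * ((q : ℝ) - 1) / (2 * q)) * ((q : ℝ) * ((q : ℝ) - 1) ^ (d - 1))
      = ((q : ℝ) - 1) ^ d * (q : ℝ) ^ d / 2 ∧
    (hammingGraph d q d).chromaticNumber = (q : ℕ∞) :=
  stmt_16_general hd
end

section
/- Every feasible solution Y of the SDP relaxation (diag(Y) = 1, kY − J ⪰ 0, Y ≥ 0 entrywise) gives an objective value (1/2)tr(LY) at most (n(k−1)/(2k))·λ_max(L); i.e., the SDP bound is dominated by the eigenvalue bound. -/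
open Matrix

open scoped MatrixOrder in
lemma Matrix.PosSemidef.trace_mul_nonneg {n : Type*} [Fintype n] {A B : Matrix n n ℝ}
    (hA : A.PosSemidef) (hB : B.PosSemidef) : 0 ≤ (A * B).trace := by
  classical
  obtain ⟨C, rfl⟩ := CStarAlgebra.nonneg_iff_eq_star_mul_self.mp hA.nonneg
  rw [Matrix.mul_assoc, trace_mul_comm, star_eq_conjTranspose]
  exact (hB.mul_mul_conjTranspose_same C).trace_nonneg

lemma hasEigenvalue_of_mem_spectrum {n : ℕ} {M : Matrix (Fin n) (Fin n) ℝ} {μ : ℝ}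
    (hμ : μ ∈ spectrum ℝ M) : hasEigenvalue M μ := by
  rw [← spectrum_toLin', ← Module.End.hasEigenvalue_iff_mem_spectrum] at hμ
  obtain ⟨v, hv⟩ := hμ.exists_hasEigenvector
  exact ⟨v, hv.2, by simpa using hv.apply_eq_smul⟩

open scoped MatrixOrder in
lemma posSemidef_smul_one_sub_of_eigenvalue_le {n : ℕ} {M : Matrix (Fin n) (Fin n) ℝ}
    (hM : M.IsHermitian) {lam : ℝ} (hlam : ∀ μ, hasEigenvalue M μ → μ ≤ lam) :
    (lam • 1 - M).PosSemidef := by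
  rw [← Algebra.algebraMap_eq_smul_one, ← le_iff]
  exact le_algebraMap_of_spectrum_le (fun μ hμ => hlam μ (hasEigenvalue_of_mem_spectrum hμ)) hM

lemma mul_of_const_one_eq_zero {n : Type*} [Fintype n] {A : Matrix n n ℝ}
    (hA : A *ᵥ (fun _ => 1) = 0) : A * of (fun _ _ => (1 : ℝ)) = 0 := by
  ext i j
  simpa [mul_apply, mulVec, dotProduct] using congrFun hA i

theorem stmt_18_general {n k : ℕ} (hk : 2 ≤ k) (G : SimpleGraph (Fin n)) [DecidableRel G.Adj]
    (lam : ℝ) (hlam : isLargestEigenvalue (G.lapMatrix ℝ) lam)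
    (Y : Matrix (Fin n) (Fin n) ℝ)
    (hdiag : ∀ i, Y i i = 1)
    (hpsd : ((k : ℝ) • Y - Matrix.of (fun _ _ => (1 : ℝ))).PosSemidef) :
    (1 / 2) * ((G.lapMatrix ℝ) * Y).trace ≤ (n : ℝ) * ((k : ℝ) - 1) / (2 * k) * lam := by
  have hLJ : G.lapMatrix ℝ * of (fun _ _ => (1 : ℝ)) = 0 :=
    mul_of_const_one_eq_zero G.lapMatrix_mulVec_const_eq_zero
  have hYJ : ((k : ℝ) • Y - of (fun _ _ => (1 : ℝ))).trace = n * ((k : ℝ) - 1) := by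
    simp [trace, hdiag, mul_sub]
  have hgap : 0 ≤ lam * (n * ((k : ℝ) - 1)) - k * (G.lapMatrix ℝ * Y).trace := by
    have := (posSemidef_smul_one_sub_of_eigenvalue_le (G.posSemidef_lapMatrix ℝ).isHermitian
      hlam.2).trace_mul_nonneg hpsd
    rwa [Matrix.sub_mul, Matrix.smul_mul, Matrix.one_mul, trace_sub, trace_smul, hYJ,
      Matrix.mul_sub, hLJ, sub_zero, Matrix.mul_smul, trace_smul, smul_eq_mul, smul_eq_mul] at this
  have hk0 : (0 : ℝ) < k := by exact_mod_cast (by omega : 0 < k)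
  calc (1 / 2) * (G.lapMatrix ℝ * Y).trace = k * (G.lapMatrix ℝ * Y).trace / (2 * k) := by
        field_simp
    _ ≤ lam * (n * ((k : ℝ) - 1)) / (2 * k) :=
        div_le_div_of_nonneg_right (by linarith) (by positivity)
    _ = (n : ℝ) * ((k : ℝ) - 1) / (2 * k) * lam := by ring

theorem stmt_18 {n k : ℕ} (hk : 2 ≤ k) (G : SimpleGraph (Fin n)) [DecidableRel G.Adj]
    (lam : ℝ) (hlam : isLargestEigenvalue (G.lapMatrix ℝ) lam)
    (Y : Matrix (Fin n) (Fin n) ℝ) (hYsymm : Y.IsSymm)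
    (hdiag : ∀ i, Y i i = 1)
    (hpsd : ((k : ℝ) • Y - Matrix.of (fun _ _ => (1 : ℝ))).PosSemidef)
    (hnonneg : ∀ i j, 0 ≤ Y i j) :
    (1 / 2) * ((G.lapMatrix ℝ) * Y).trace ≤ (n : ℝ) * ((k : ℝ) - 1) / (2 * k) * lam :=
  stmt_18_general hk G lam hlam Y hdiag hpsd
end
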